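/- arXiv:1906.01027 — 5 statements merged into one kernel-verified Lean document; each statement's English description precedes it below -/
import Mathlib

section
/- Let v : ℝ × ℝ → ℝ, v = v(t,x), be of class C³ (all partial derivatives up to order three exist and mixed partial derivatives commute). Then for all (t,x) one has the pointwise identity v·E = λ(v² + v_x²) + ∂_t( (v² + v_x²)/2 ) + ∂_x( v³ - v² v_{xx} - v v_{tx} + (Γ/2)v_x² - Γ v v_{xx} - (α/2)v² - (β/4)v⁴ - (γ/5)v⁵ - λ v v_x ), where every function is evaluated at (t,x). -/
/-- Partial derivative with respect to the first (time) variable of a curried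
function `v : ℝ → ℝ → ℝ`, `v = v t x`. -/
noncomputable def pt (v : ℝ → ℝ → ℝ) : ℝ → ℝ → ℝ := fun t x => deriv (fun s => v s x) t

/-- Partial derivative with respect to the second (space) variable of a curried
function `v : ℝ → ℝ → ℝ`, `v = v t x`. -/
noncomputable def px (v : ℝ → ℝ → ℝ) : ℝ → ℝ → ℝ := fun t x => deriv (fun y => v t y) x

/-!
Once the `t`-derivative of the energy density `(v² + v_x²)/2` and the `x`-derivative of the flux
are expanded by the product and chain rules, both sides are polynomials in `v` and its partial
derivatives, and they agree as polynomials up to the mixed partials: the term `v_x v_{xt}` coming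
from the energy density cancels `-v_x v_{tx}` from the flux because `v_{xt} = v_{tx}` for `C²`
functions.
-/

open Function

section PartialDerivatives

variable {v : ℝ → ℝ → ℝ} {t x : ℝ}

lemma hasDerivAt_slice_snd (h : DifferentiableAt ℝ (uncurry v) (t, x)) :
    HasDerivAt (fun y => v t y) (fderiv ℝ (uncurry v) (t, x) (0, 1)) x :=
  h.hasFDerivAt.comp_hasDerivAt x ((hasDerivAt_const x t).prodMk (hasDerivAt_id x))

lemma hasDerivAt_slice_fst (h : DifferentiableAt ℝ (uncurry v) (t, x)) :
    HasDerivAt (fun s => v s x) (fderiv ℝ (uncurry v) (t, x) (1, 0)) t :=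
  h.hasFDerivAt.comp_hasDerivAt (l := uncurry v) t
    ((hasDerivAt_id t).prodMk (hasDerivAt_const t x))

lemma px_eq_fderiv (h : DifferentiableAt ℝ (uncurry v) (t, x)) :
    px v t x = fderiv ℝ (uncurry v) (t, x) (0, 1) :=
  (hasDerivAt_slice_snd h).deriv

lemma pt_eq_fderiv (h : DifferentiableAt ℝ (uncurry v) (t, x)) :
    pt v t x = fderiv ℝ (uncurry v) (t, x) (1, 0) :=
  (hasDerivAt_slice_fst h).deriv

lemma hasDerivAt_px (h : DifferentiableAt ℝ (uncurry v) (t, x)) :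
    HasDerivAt (fun y => v t y) (px v t x) x :=
  px_eq_fderiv h ▸ hasDerivAt_slice_snd h

lemma hasDerivAt_pt (h : DifferentiableAt ℝ (uncurry v) (t, x)) :
    HasDerivAt (fun s => v s x) (pt v t x) t :=
  pt_eq_fderiv h ▸ hasDerivAt_slice_fst h

lemma uncurry_px_eq_fderiv (h : Differentiable ℝ (uncurry v)) :
    uncurry (px v) = fun p => fderiv ℝ (uncurry v) p (0, 1) :=
  funext fun p => px_eq_fderiv (h p)

lemma uncurry_pt_eq_fderiv (h : Differentiable ℝ (uncurry v)) :
    uncurry (pt v) = fun p => fderiv ℝ (uncurry v) p (1, 0) :=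
  funext fun p => pt_eq_fderiv (h p)

variable {m n : WithTop ℕ∞}

lemma contDiff_uncurry_px (hv : ContDiff ℝ n (uncurry v)) (hmn : m + 1 ≤ n) :
    ContDiff ℝ m (uncurry (px v)) := by
  rw [uncurry_px_eq_fderiv ((hv.of_le (le_add_self.trans hmn)).differentiable one_ne_zero)]
  exact (hv.fderiv_right hmn).clm_apply contDiff_const

lemma contDiff_uncurry_pt (hv : ContDiff ℝ n (uncurry v)) (hmn : m + 1 ≤ n) :
    ContDiff ℝ m (uncurry (pt v)) := by
  rw [uncurry_pt_eq_fderiv ((hv.of_le (le_add_self.trans hmn)).differentiable one_ne_zero)]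
  exact (hv.fderiv_right hmn).clm_apply contDiff_const

lemma px_pt_comm (hv : ContDiff ℝ 2 (uncurry v)) : px (pt v) t x = pt (px v) t x := by
  have hd : Differentiable ℝ (uncurry v) := hv.differentiable (by norm_num)
  have hdd : DifferentiableAt ℝ (fderiv ℝ (uncurry v)) (t, x) :=
    (hv.fderiv_right (m := 1) (by norm_num)).differentiable one_ne_zero _
  have hsymm : IsSymmSndFDerivAt ℝ (uncurry v) (t, x) :=
    hv.contDiffAt.isSymmSndFDerivAt (by simp)
  rw [px_eq_fderiv ((contDiff_uncurry_pt (m := 1) hv (by norm_num)).differentiable one_ne_zero _),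
    pt_eq_fderiv ((contDiff_uncurry_px (m := 1) hv (by norm_num)).differentiable one_ne_zero _),
    uncurry_pt_eq_fderiv hd, uncurry_px_eq_fderiv hd,
    fderiv_clm_apply hdd (differentiableAt_const _), fderiv_clm_apply hdd (differentiableAt_const _)]
  simpa using hsymm (0, 1) (1, 0)

end PartialDerivatives

/-- the differential identity (3.0.2) of the paper. -/
theorem stmt_1 (lam α β γ Γ : ℝ) (v : ℝ → ℝ → ℝ)
    (hv : ContDiff ℝ 3 (Function.uncurry v)) (t x : ℝ) :
    v t x *
      (pt v t x - px (px (pt v)) t x + 3 * v t x * px v t x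
        + lam * (v t x - px (px v) t x)
        - 2 * px v t x * px (px v) t x - v t x * px (px (px v)) t x
        - α * px v t x - β * (v t x) ^ 2 * px v t x - γ * (v t x) ^ 3 * px v t x
        - Γ * px (px (px v)) t x)
    = lam * ((v t x) ^ 2 + (px v t x) ^ 2)
      + deriv (fun s => ((v s x) ^ 2 + (px v s x) ^ 2) / 2) t
      + deriv (fun y =>
          (v t y) ^ 3 - (v t y) ^ 2 * px (px v) t y - v t y * px (pt v) t y
            + (Γ / 2) * (px v t y) ^ 2 - Γ * v t y * px (px v) t y
            - (α / 2) * (v t y) ^ 2 - (β / 4) * (v t y) ^ 4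
            - (γ / 5) * (v t y) ^ 5 - lam * v t y * px v t y) x := by
  have hvx : ContDiff ℝ 2 (uncurry (px v)) := contDiff_uncurry_px hv (by norm_num)
  have hvt : ContDiff ℝ 2 (uncurry (pt v)) := contDiff_uncurry_pt hv (by norm_num)
  have hvxx : ContDiff ℝ 1 (uncurry (px (px v))) := contDiff_uncurry_px hvx (by norm_num)
  have hvtx : ContDiff ℝ 1 (uncurry (px (pt v))) := contDiff_uncurry_px hvt (by norm_num)
  have v_x := hasDerivAt_px (hv.differentiable (by norm_num) (t, x))
  have vx_x := hasDerivAt_px (hvx.differentiable (by norm_num) (t, x))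
  have vxx_x := hasDerivAt_px (hvxx.differentiable one_ne_zero (t, x))
  have vtx_x := hasDerivAt_px (hvtx.differentiable one_ne_zero (t, x))
  have v_t := hasDerivAt_pt (hv.differentiable (by norm_num) (t, x))
  have vx_t := hasDerivAt_pt (hvx.differentiable (by norm_num) (t, x))
  have energy := ((v_t.fun_pow 2).fun_add (vx_t.fun_pow 2)).div_const 2
  have flux := (v_x.fun_pow 3).fun_sub ((v_x.fun_pow 2).fun_mul vxx_x)
    |>.fun_sub (v_x.fun_mul vtx_x) |>.fun_add ((vx_x.fun_pow 2).const_mul (Γ / 2))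
    |>.fun_sub ((v_x.const_mul Γ).fun_mul vxx_x) |>.fun_sub ((v_x.fun_pow 2).const_mul (α / 2))
    |>.fun_sub ((v_x.fun_pow 4).const_mul (β / 4)) |>.fun_sub ((v_x.fun_pow 5).const_mul (γ / 5))
    |>.fun_sub ((v_x.const_mul lam).fun_mul vx_x)
  rw [energy.deriv, flux.deriv, px_pt_comm (hv.of_le (by norm_num))]
  push_cast
  ring
end

section
/- Let m : ℝ → ℝ be continuous and integrable, and suppose there exists x₀ ∈ ℝ such that m(x) ≤ 0 for all x ≤ x₀ and m(x) ≥ 0 for all x ≥ x₀. Define u(x) := (1/2)∫_ℝ e^{-|x-ξ|} m(ξ) dξ. Then u is bounded and differentiable, u'(x) ≥ -u(x) for every x ≥ x₀, u'(x) ≥ u(x) for every x ≤ x₀, and consequently u'(x) ≥ -sup_{y∈ℝ}|u(y)| for every x ∈ ℝ. -/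
/-!
Splitting the kernel at `ξ = x` gives
`2 u(x) = e^{-x} A(x) + e^{x} B(x)` with `A(x) = ∫_{ξ ≤ x} e^{ξ} m` and `B(x) = ∫_{ξ > x} e^{-ξ} m`.
Since `A' = e^{x} m` and `B' = -e^{-x} m`, the terms in `m` cancel and `2 u' = e^{x} B - e^{-x} A`.
Hence `u' + u = e^{x} B(x)`, which is `≥ 0` once `x ≥ x₀` (only `m ≥ 0` enters `B`), and
`u' - u = -e^{-x} A(x)`, which is `≥ 0` once `x ≤ x₀`. Either way `u' ≥ -|u| ≥ -sup |u|`.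
-/

open MeasureTheory Set Real

section FundamentalTheorem

variable {E : Type*} [NormedAddCommGroup E] [NormedSpace ℝ E] [CompleteSpace E] {f : ℝ → E}

theorem hasDerivAt_integral_Iic (hf : Continuous f) (hfi : ∀ a, IntegrableOn f (Iic a))
    (x : ℝ) : HasDerivAt (fun a => ∫ t in Iic a, f t) (f x) x := by
  have hsplit : (fun a => ∫ t in Iic a, f t) = fun a => (∫ t in Iic x, f t) + ∫ t in x..a, f t :=
    funext fun a => by rw [← intervalIntegral.integral_Iic_sub_Iic (hfi x) (hfi a)]; abel
  rw [hsplit]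
  exact (intervalIntegral.integral_hasDerivAt_right (hf.intervalIntegrable _ _)
    (hf.stronglyMeasurableAtFilter _ _) hf.continuousAt).const_add _

theorem hasDerivAt_integral_Ioi (hf : Continuous f) (hfi : ∀ a, IntegrableOn f (Ioi a))
    (x : ℝ) : HasDerivAt (fun a => ∫ t in Ioi a, f t) (-f x) x := by
  have hsplit : (fun a => ∫ t in Ioi a, f t) = fun a => (∫ t in Ioi x, f t) - ∫ t in x..a, f t :=
    funext fun a => by rw [← intervalIntegral.integral_Ioi_sub_Ioi' (hfi x) (hfi a)]; abel
  rw [hsplit]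
  exact (intervalIntegral.integral_hasDerivAt_right (hf.intervalIntegrable _ _)
    (hf.stronglyMeasurableAtFilter _ _) hf.continuousAt).const_sub _

end FundamentalTheorem

section PeakonConvolution

variable {m : ℝ → ℝ}

theorem integrable_exp_neg_abs_sub_mul (hmi : Integrable m) (x : ℝ) :
    Integrable (fun ξ => exp (-|x - ξ|) * m ξ) :=
  hmi.bdd_mul (c := 1) (by fun_prop) <| .of_forall fun ξ => by
    simp [abs_of_pos (exp_pos _)]

theorem integrableOn_Iic_exp_mul (hmi : Integrable m) (a : ℝ) :
    IntegrableOn (fun t => exp t * m t) (Iic a) :=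
  hmi.integrableOn.bdd_mul (c := exp a) (by fun_prop) <|
    (ae_restrict_iff' measurableSet_Iic).2 <| .of_forall fun t (ht : t ≤ a) => by
      simpa [abs_of_pos (exp_pos _)] using ht

theorem integrableOn_Ioi_exp_neg_mul (hmi : Integrable m) (a : ℝ) :
    IntegrableOn (fun t => exp (-t) * m t) (Ioi a) :=
  hmi.integrableOn.bdd_mul (c := exp (-a)) (by fun_prop) <|
    (ae_restrict_iff' measurableSet_Ioi).2 <| .of_forall fun t (ht : a < t) => by
      simpa [abs_of_pos (exp_pos _)] using ht.le

theorem integral_exp_neg_abs_sub_mul_eq (hmi : Integrable m) (x : ℝ) :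
    ∫ ξ, exp (-|x - ξ|) * m ξ
      = exp (-x) * (∫ t in Iic x, exp t * m t) + exp x * ∫ t in Ioi x, exp (-t) * m t := by
  have hint := integrable_exp_neg_abs_sub_mul hmi x
  rw [← intervalIntegral.integral_Iic_add_Ioi hint.integrableOn hint.integrableOn,
    ← integral_const_mul, ← integral_const_mul]
  congr 1
  · refine setIntegral_congr_fun measurableSet_Iic fun ξ (hξ : ξ ≤ x) => ?_
    rw [abs_of_nonneg (sub_nonneg.2 hξ), ← mul_assoc, ← exp_add]
    ring_nf
  · refine setIntegral_congr_fun measurableSet_Ioi fun ξ (hξ : x < ξ) => ?_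
    rw [abs_of_neg (sub_neg.2 hξ), ← mul_assoc, ← exp_add]
    ring_nf

theorem hasDerivAt_integral_exp_neg_abs_sub_mul (hm : Continuous m) (hmi : Integrable m)
    (x : ℝ) :
    HasDerivAt (fun x => ∫ ξ, exp (-|x - ξ|) * m ξ)
      (exp x * (∫ t in Ioi x, exp (-t) * m t) - exp (-x) * ∫ t in Iic x, exp t * m t) x := by
  have hA := hasDerivAt_integral_Iic (by fun_prop) (integrableOn_Iic_exp_mul hmi) x
  have hB := hasDerivAt_integral_Ioi (by fun_prop) (integrableOn_Ioi_exp_neg_mul hmi) x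
  have hsum := ((hasDerivAt_neg x).exp.mul hA).add ((hasDerivAt_exp x).mul hB)
  rw [funext (integral_exp_neg_abs_sub_mul_eq hmi)]
  exact hsum.congr_deriv (by ring)

theorem abs_integral_exp_neg_abs_sub_mul_le (hmi : Integrable m) (x : ℝ) :
    |∫ ξ, exp (-|x - ξ|) * m ξ| ≤ ∫ ξ, |m ξ| := by
  rw [← Real.norm_eq_abs]
  refine norm_integral_le_of_norm_le hmi.abs <| .of_forall fun ξ => ?_
  rw [norm_mul, norm_of_nonneg (exp_pos _).le, Real.norm_eq_abs]
  exact mul_le_of_le_one_left (abs_nonneg _) (exp_le_one_iff.2 (neg_nonpos.2 (abs_nonneg _)))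

end PeakonConvolution

/-- if `m` is nonpositive to the left of `x₀` and nonnegative to
its right, then `u = g ∗ m` (with `g(y) = e^{-|y|}/2`) is bounded and
differentiable, `u' ≥ -u` to the right of `x₀`, `u' ≥ u` to its left, and
consequently `u'(x) ≥ -sup_y |u(y)|` everywhere. -/
theorem stmt_9 (m : ℝ → ℝ) (hm : Continuous m) (hmi : Integrable m)
    (x₀ : ℝ) (hneg : ∀ x : ℝ, x ≤ x₀ → m x ≤ 0) (hpos : ∀ x : ℝ, x₀ ≤ x → 0 ≤ m x)
    (u : ℝ → ℝ) (hu : ∀ x : ℝ, u x = (1 / 2) * ∫ ξ : ℝ, Real.exp (-|x - ξ|) * m ξ) :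
    (∃ C : ℝ, ∀ x : ℝ, |u x| ≤ C)
    ∧ (∀ x : ℝ, DifferentiableAt ℝ u x)
    ∧ (∀ x : ℝ, x₀ ≤ x → -u x ≤ deriv u x)
    ∧ (∀ x : ℝ, x ≤ x₀ → u x ≤ deriv u x)
    ∧ (∀ x : ℝ, -(⨆ y : ℝ, |u y|) ≤ deriv u x) := by
  set A := fun x => ∫ t in Iic x, exp t * m t
  set B := fun x => ∫ t in Ioi x, exp (-t) * m t
  have hsplit (x : ℝ) : u x = (1 / 2) * (exp (-x) * A x + exp x * B x) := by
    rw [hu, integral_exp_neg_abs_sub_mul_eq hmi]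
  have hderiv (x : ℝ) : HasDerivAt u ((1 / 2) * (exp x * B x - exp (-x) * A x)) x := by
    rw [funext hu]
    exact (hasDerivAt_integral_exp_neg_abs_sub_mul hm hmi x).const_mul _
  have hbound (x : ℝ) : |u x| ≤ (1 / 2) * ∫ ξ, |m ξ| := by
    rw [hu, abs_mul, abs_of_pos one_half_pos]
    exact mul_le_mul_of_nonneg_left (abs_integral_exp_neg_abs_sub_mul_le hmi x) one_half_pos.le
  have hright (x : ℝ) (hx : x₀ ≤ x) : -u x ≤ deriv u x := by
    have hB : 0 ≤ B x := setIntegral_nonneg measurableSet_Ioi fun t (ht : x < t) =>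
      mul_nonneg (exp_pos _).le (hpos t (hx.trans ht.le))
    rw [(hderiv x).deriv, hsplit]
    nlinarith [exp_pos x]
  have hleft (x : ℝ) (hx : x ≤ x₀) : u x ≤ deriv u x := by
    have hA : A x ≤ 0 := setIntegral_nonpos measurableSet_Iic fun t (ht : t ≤ x) =>
      mul_nonpos_of_nonneg_of_nonpos (exp_pos _).le (hneg t (ht.trans hx))
    rw [(hderiv x).deriv, hsplit]
    nlinarith [exp_pos (-x)]
  refine ⟨⟨_, hbound⟩, fun x => (hderiv x).differentiableAt, hright, hleft, fun x => ?_⟩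
  have hsup : |u x| ≤ ⨆ y, |u y| := le_ciSup ⟨_, forall_mem_range.2 hbound⟩ x
  rcases le_total x₀ x with hx | hx
  · linarith [hright x hx, le_abs_self (u x)]
  · linarith [hleft x hx, neg_abs_le (u x)]
end

section
/- Let u : ℝ → ℝ be continuously differentiable with u and u' square-integrable on ℝ and u(x) → 0 as x → ±∞. Then for every x ∈ ℝ: (1/2)∫_ℝ e^{-|x-y|}( u(y)² + u'(y)²/2 ) dy ≥ u(x)²/2. -/
/-! For `y ≤ x`, `(e^{y-x} u(y)²)' = e^{y-x} (u² + 2uu') ≤ e^{-|x-y|} (2u² + u'²)` since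
`2uu' ≤ u² + u'²`. Integrating over `(-∞, x]` and using `u → 0` at `-∞` bounds `u(x)²` by the
integral of `e^{-|x-y|} (2u² + u'²)` over `y ≤ x`; reflecting `y ↦ -y` gives the same bound over
`y > x`. Adding the two, `2u(x)² ≤ ∫ e^{-|x-y|} (2u² + u'²)`, which is four times the claim. -/

open MeasureTheory Filter Set Real Topology

theorem MeasureTheory.Integrable.exp_neg_abs_sub_mul {h : ℝ → ℝ} (hh : Integrable h) (x : ℝ) :
    Integrable (fun y => exp (-|x - y|) * h y) :=
  hh.bdd_mul (c := 1) (by fun_prop) <| Eventually.of_forall fun y => by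
    rw [norm_of_nonneg (exp_pos _).le, exp_le_one_iff, neg_nonpos]
    exact abs_nonneg _

theorem le_setIntegral_Iic_of_hasDerivAt {f f' g : ℝ → ℝ} {a : ℝ}
    (hderiv : ∀ x ≤ a, HasDerivAt f (f' x) x) (hf' : IntegrableOn f' (Iic a))
    (hg : IntegrableOn g (Iic a)) (hle : ∀ x ≤ a, f' x ≤ g x)
    (hbot : Tendsto f atBot (𝓝 0)) : f a ≤ ∫ x in Iic a, g x :=
  calc f a = ∫ x in Iic a, f' x := by
        rw [integral_Iic_of_hasDerivAt_of_tendsto (hderiv a le_rfl).continuousAt.continuousWithinAt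
          (fun x hx => hderiv x hx.le) hf' hbot, sub_zero]
    _ ≤ ∫ x in Iic a, g x := setIntegral_mono_on hf' hg measurableSet_Iic hle

theorem sq_le_setIntegral_Iic_exp_neg_abs_mul {u : ℝ → ℝ} (hu : Differentiable ℝ u)
    (hu2 : Integrable (fun y => u y ^ 2)) (hu'2 : Integrable (fun y => deriv u y ^ 2))
    (hbot : Tendsto u atBot (𝓝 0)) (x : ℝ) :
    u x ^ 2 ≤ ∫ y in Iic x, exp (-|x - y|) * (2 * u y ^ 2 + deriv u y ^ 2) := by
  have hweight : ∀ y ≤ x, exp (y - x) = exp (-|x - y|) := fun y hy => by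
    rw [abs_of_nonneg (sub_nonneg.2 hy), neg_sub]
  have huu' : Integrable (fun y => u y * deriv u y) :=
    ((memLp_two_iff_integrable_sq hu.continuous.aestronglyMeasurable).2 hu2).integrable_mul
      ((memLp_two_iff_integrable_sq (measurable_deriv u).aestronglyMeasurable).2 hu'2)
  calc u x ^ 2 = exp (x - x) * u x ^ 2 := by simp
    _ ≤ _ := le_setIntegral_Iic_of_hasDerivAt (f := fun y => exp (y - x) * u y ^ 2)
        (f' := fun y => exp (-|x - y|) * (u y ^ 2 + 2 * (u y * deriv u y)))
        (g := fun y => exp (-|x - y|) * (2 * u y ^ 2 + deriv u y ^ 2)) (fun y hy => ?_)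
        ((hu2.add (huu'.const_mul 2)).exp_neg_abs_sub_mul x).integrableOn
        (((hu2.const_mul 2).add hu'2).exp_neg_abs_sub_mul x).integrableOn (fun y _ => ?_) ?_
  · refine (((hasDerivAt_id y).sub_const x).exp.mul ((hu y).hasDerivAt.pow 2)).congr_deriv ?_
    rw [← hweight y hy]
    simp only [id_eq, mul_one, Pi.pow_apply, Nat.cast_ofNat, Nat.add_one_sub_one, pow_one]
    ring
  · exact mul_le_mul_of_nonneg_left (by nlinarith [two_mul_le_add_sq (u y) (deriv u y)])
      (exp_pos _).le
  · have hexp : Tendsto (fun y => exp (y - x)) atBot (𝓝 0) :=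
      tendsto_exp_atBot.comp (tendsto_atBot_add_const_right _ _ tendsto_id)
    simpa using hexp.mul (hbot.pow 2)

theorem sq_le_setIntegral_Ioi_exp_neg_abs_mul {u : ℝ → ℝ} (hu : Differentiable ℝ u)
    (hu2 : Integrable (fun y => u y ^ 2)) (hu'2 : Integrable (fun y => deriv u y ^ 2))
    (htop : Tendsto u atTop (𝓝 0)) (x : ℝ) :
    u x ^ 2 ≤ ∫ y in Ioi x, exp (-|x - y|) * (2 * u y ^ 2 + deriv u y ^ 2) := by
  have h := sq_le_setIntegral_Iic_exp_neg_abs_mul (u := fun y => u (-y))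
    (hu.comp differentiable_neg) hu2.comp_neg (by simpa [deriv_comp_neg] using hu'2.comp_neg)
    (htop.comp tendsto_neg_atBot_atTop) (-x)
  rw [neg_neg, ← integral_comp_neg_Ioi] at h
  simpa [deriv_comp_neg, abs_sub_comm, neg_add_eq_sub] using h

/-- the lower bound `F(u) ≥ u²/2` of Proposition 4.1 of the paper,
where `F(u) = Λ⁻²(u² + u_x²/2)` is convolution with the Green kernel `e^{-|y|}/2`. -/
theorem stmt_10 (u : ℝ → ℝ) (hu : ContDiff ℝ 1 u)
    (hu2 : Integrable (fun y => (u y) ^ 2))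
    (hux2 : Integrable (fun y => (deriv u y) ^ 2))
    (huTop : Tendsto u atTop (nhds 0)) (huBot : Tendsto u atBot (nhds 0)) :
    ∀ x : ℝ,
      (u x) ^ 2 / 2
        ≤ (1 / 2) * ∫ y : ℝ, Real.exp (-|x - y|) * ((u y) ^ 2 + (deriv u y) ^ 2 / 2) := by
  intro x
  have hud : Differentiable ℝ u := hu.differentiable one_ne_zero
  have hint : Integrable (fun y => exp (-|x - y|) * (2 * u y ^ 2 + deriv u y ^ 2)) :=
    ((hu2.const_mul 2).add hux2).exp_neg_abs_sub_mul x
  have hsplit := intervalIntegral.integral_Iic_add_Ioi (b := x) hint.integrableOn hint.integrableOn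
  have hleft := sq_le_setIntegral_Iic_exp_neg_abs_mul hud hu2 hux2 huBot x
  have hright := sq_le_setIntegral_Ioi_exp_neg_abs_mul hud hu2 hux2 huTop x
  calc u x ^ 2 / 2 ≤ 1 / 4 * ∫ y, exp (-|x - y|) * (2 * u y ^ 2 + deriv u y ^ 2) := by linarith
    _ = _ := by
      rw [← integral_const_mul, ← integral_const_mul]
      congr 1 with y
      ring
end

section
/- Let y₀ < 0, ε₀ > 0 and λ ∈ ℝ with 0 < λ < -ε₀ y₀ / 4. Then there is no differentiable function y : [0,∞) → ℝ such that y(0) = y₀ and y'(t) + λ y(t) ≤ -(ε₀/4) y(t)² for all t ≥ 0. -/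
/-- the Riccati-type blow-up argument of Theorem 1.4 of the paper:
if `y₀ < 0`, `ε₀ > 0` and `0 < λ < -ε₀ y₀ / 4`, then no differentiable
`y : [0,∞) → ℝ` can satisfy `y(0) = y₀` and `y' + λ y ≤ -(ε₀/4) y²` on `[0,∞)`. -/
theorem stmt_13 (y₀ ε₀ lam : ℝ) (hy₀ : y₀ < 0) (hε₀ : 0 < ε₀)
    (hlam : 0 < lam) (hlam' : lam < -(ε₀ * y₀) / 4) :
    ¬ ∃ (y y' : ℝ → ℝ),
        y 0 = y₀
        ∧ (∀ t : ℝ, 0 ≤ t → HasDerivWithinAt y (y' t) (Set.Ici 0) t)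
        ∧ ∀ t : ℝ, 0 ≤ t → y' t + lam * y t ≤ -(ε₀ / 4) * (y t) ^ 2 := by
  rintro ⟨y, y', h0, hderiv, hineq⟩
  set c : ℝ := ε₀ / 4 with hc
  have hcpos : 0 < c := by positivity
  have hkey : c * y₀ + lam < 0 := by
    have : lam < -(c * y₀) := by rw [hc]; linarith [hlam']
    linarith
  -- continuity of y on Ici 0
  have hcont : ContinuousOn y (Set.Ici (0:ℝ)) := fun t ht =>
    (hderiv t ht).continuousWithinAt
  -- Step 1: y t ≤ y₀ for all t ≥ 0
  have hle : ∀ t : ℝ, 0 ≤ t → y t ≤ y₀ := by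
    by_contra h
    push_neg at h
    obtain ⟨t₁, ht₁, hgt⟩ := h
    set A : Set ℝ := Set.Icc 0 t₁ ∩ y ⁻¹' Set.Iic y₀ with hA
    have hAne : A.Nonempty := ⟨0, ⟨le_refl 0, ht₁⟩, by simp [h0]⟩
    have hAclosed : IsClosed A :=
      ContinuousOn.preimage_isClosed_of_isClosed
        (hcont.mono (fun x hx => hx.1)) isClosed_Icc isClosed_Iic
    have hAcomp : IsCompact A :=
      (isCompact_Icc (a := (0:ℝ)) (b := t₁)).of_isClosed_subset hAclosed
        Set.inter_subset_left
    set T := sSup A with hT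
    have hTA : T ∈ A := hAcomp.sSup_mem hAne
    obtain ⟨⟨hT0, hTt₁⟩, hTy⟩ := hTA
    have hTy : y T ≤ y₀ := hTy
    have hTlt : T < t₁ := lt_of_le_of_ne hTt₁ (fun heq => by
      rw [heq] at hTy; exact absurd hTy (not_le.mpr hgt))
    -- on (T, t₁], y s > y₀
    have hbig : ∀ s, T < s → s ≤ t₁ → y₀ < y s := by
      intro s hs hs'
      by_contra hle'
      push_neg at hle'
      have hsA : s ∈ A := ⟨⟨le_trans hT0 hs.le, hs'⟩, hle'⟩
      exact absurd (le_csSup hAcomp.bddAbove hsA) (not_le.mpr hs)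
    -- y T = y₀ by right continuity
    have hyT : y T = y₀ := by
      refine le_antisymm hTy ?_
      have htend : Filter.Tendsto y (nhdsWithin T (Set.Ioi T)) (nhds (y T)) := by
        exact (hcont T hT0).tendsto.mono_left
          (nhdsWithin_mono T (fun x hx => le_trans hT0 (le_of_lt hx)))
      refine ge_of_tendsto htend ?_
      filter_upwards [Ioc_mem_nhdsGT_of_mem ⟨le_refl T, hTlt⟩] with s hs
      exact (hbig s hs.1 hs.2).le
    -- derivative at T is negative
    have hdT : y' T < 0 := by
      have h1 := hineq T hT0
      rw [hyT] at h1
      nlinarith [mul_pos (neg_pos.mpr hy₀) (neg_pos.mpr hkey)]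
    -- slope tendsto
    have hslope := hasDerivWithinAt_iff_tendsto_slope.mp (hderiv T hT0)
    have hmono : nhdsWithin T (Set.Ioi T) ≤ nhdsWithin T (Set.Ici 0 \ {T}) :=
      nhdsWithin_mono T (fun x hx => ⟨le_trans hT0 hx.le, ne_of_gt hx⟩)
    have hslope' : Filter.Tendsto (slope y T) (nhdsWithin T (Set.Ioi T)) (nhds (y' T)) :=
      hslope.mono_left hmono
    have hev : ∀ᶠ s in nhdsWithin T (Set.Ioi T), slope y T s < 0 :=
      hslope'.eventually (Filter.Tendsto.eventually_lt_const hdT Filter.tendsto_id)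
    have hev2 : ∀ᶠ s in nhdsWithin T (Set.Ioi T), s ∈ Set.Ioc T t₁ :=
      Ioc_mem_nhdsGT_of_mem ⟨le_refl T, hTlt⟩
    obtain ⟨s, hs1, hs2⟩ := (hev.and hev2).exists
    have hsgt : T < s := hs2.1
    have hslt : y s < y T := by
      rw [slope_def_field] at hs1
      have hpos : (0:ℝ) < s - T := by linarith
      have h4 : y s - y T = (y s - y T) / (s - T) * (s - T) := by field_simp
      have h5 := mul_neg_of_neg_of_pos hs1 hpos
      linarith
    have := hbig s hsgt hs2.2
    rw [hyT] at hslt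
    linarith
  -- Step 2: z = 1/y grows at least linearly
  have hneg : ∀ t : ℝ, 0 ≤ t → y t < 0 := fun t ht => lt_of_le_of_lt (hle t ht) hy₀
  set δ : ℝ := c + lam / y₀ with hδ
  have hδpos : 0 < δ := by
    rw [hδ]
    have h1 : lam / y₀ > -c := by
      rw [gt_iff_lt, lt_div_iff_of_neg hy₀]
      nlinarith
    linarith
  set g : ℝ → ℝ := fun t => (y t)⁻¹ - δ * t with hg
  have hgderiv : ∀ t : ℝ, 0 ≤ t →
      HasDerivWithinAt g (-(y' t) / (y t) ^ 2 - δ) (Set.Ici 0) t := by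
    intro t ht
    exact ((hderiv t ht).inv (ne_of_lt (hneg t ht))).sub
      ((hasDerivWithinAt_id t _).const_mul δ |>.congr_deriv (by ring))
  have hg'nonneg : ∀ t : ℝ, 0 ≤ t → 0 ≤ -(y' t) / (y t) ^ 2 - δ := by
    intro t ht
    have hyt := hneg t ht
    have hsq : (0:ℝ) < (y t) ^ 2 := by nlinarith [mul_pos (neg_pos.mpr hyt) (neg_pos.mpr hyt)]
    have h1 := hineq t ht
    rw [sub_nonneg, le_div_iff₀ hsq]
    -- δ * y t ^ 2 ≤ - y' t
    have h2 : y' t ≤ -(c * (y t) ^ 2) - lam * y t := by rw [hc] at *; linarith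
    have hyle := hle t ht
    -- need: (c + lam/y₀) * yt² ≤ c yt² + lam yt  i.e.  (lam/y₀) yt² ≤ lam yt
    have h3 : (lam / y₀) * (y t) ^ 2 ≤ lam * y t := by
      rw [div_mul_eq_mul_div, div_le_iff_of_neg hy₀]
      nlinarith [mul_nonneg (mul_nonneg hlam.le (neg_nonneg.mpr hyt.le)) (sub_nonneg.mpr hyle)]
    rw [hδ]
    nlinarith
  -- g is monotone on Ici 0
  have hgmono : MonotoneOn g (Set.Ici (0:ℝ)) := by
    apply monotoneOn_of_hasDerivWithinAt_nonneg (convex_Ici 0)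
    · exact fun t ht => (hgderiv t ht).continuousWithinAt
    · intro x hx
      rw [interior_Ici] at hx ⊢
      exact (hgderiv x (le_of_lt hx)).mono (Set.Ioi_subset_Ici le_rfl)
    · intro x hx
      rw [interior_Ici] at hx
      exact hg'nonneg x (le_of_lt hx)
  -- contradiction at large time
  set t₂ : ℝ := (1 - (y₀)⁻¹) / δ with ht₂
  have hy₀inv : (y₀)⁻¹ < 0 := inv_neg''.mpr hy₀
  have ht₂pos : 0 < t₂ := by
    rw [ht₂]
    apply div_pos (by linarith) hδpos
  have hgle : g 0 ≤ g t₂ := hgmono (Set.self_mem_Ici) (le_of_lt ht₂pos) (le_of_lt ht₂pos)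
  have hg0 : g 0 = (y₀)⁻¹ := by simp [hg, h0]
  have hgt₂ : g t₂ = (y t₂)⁻¹ - δ * t₂ := rfl
  have hδt₂ : δ * t₂ = 1 - (y₀)⁻¹ := by
    rw [ht₂, mul_div_cancel₀ _ (ne_of_gt hδpos)]
  have hfinal : (1:ℝ) ≤ (y t₂)⁻¹ := by
    have := hgle
    rw [hg0, hgt₂, hδt₂] at this
    linarith
  have : (y t₂)⁻¹ < 0 := inv_neg''.mpr (hneg t₂ (le_of_lt ht₂pos))
  linarith
end

section
/- Let λ, Γ ∈ ℝ, T ∈ (0,∞], and let u, m : ℝ × ℝ → ℝ, where m is continuously differentiable and ∂_x u is continuous, and suppose m satisfies ∂_t m + (u+Γ)∂_x m + 2(∂_x u) m + λ m = ∂_x(h∘u) for all (t,x) ∈ [0,T) × ℝ. Fix x ∈ ℝ and let q : [0,T) → ℝ be differentiable with q(0) = x and q'(t) = u(t, q(t)) + Γ, and let w : [0,T) → ℝ be differentiable with w(0) = 1 and w'(t) = (∂_x u)(t, q(t)) · w(t), and assume s ↦ e^{λs} w(s)² ∂_x(h∘u)(s, q(s)) is continuous. Then for every t ∈ [0,T):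 m(t, q(t)) · w(t)² = m(0,x) e^{-λ t} + ∫₀ᵗ e^{λ(s-t)} w(s)² ∂_x(h∘u)(s, q(s)) ds. -/
/-!
Along the characteristic `q`, the quantity `y(t) = m(t, q(t)) w(t)²` solves the scalar linear
equation `y' = -λ y + w² ∂ₓ(h∘u)(t, q(t))`: the chain rule turns `∂ₜm + (u+Γ)∂ₓm` into the
derivative of `m` along `q`, and the term `2 (∂ₓu) m` of the equation is cancelled by the
derivative `(w²)' = 2 (∂ₓu) w²` of the weight. Duhamel's formula for this equation is the claim.
-/

open Filter intervalIntegral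

/-- The half-open time interval `[0, T)` for `T ∈ (0, ∞]`, as a set of reals. -/
def timeInterval (T : EReal) : Set ℝ := {t : ℝ | 0 ≤ t ∧ (t : EReal) < T}

/-- The nonlinearity `h(z) = (α+Γ)z + (β/3)z³ + (γ/4)z⁴` of the dissipative
Camassa–Holm-type equation in nonlocal form. -/
noncomputable def hfun (α β γ Γ : ℝ) : ℝ → ℝ := fun z =>
  (α + Γ) * z + (β / 3) * z ^ 3 + (γ / 4) * z ^ 4

open Set Real

lemma Icc_subset_timeInterval {T : EReal} {t : ℝ} (ht : t ∈ timeInterval T) :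
    Icc 0 t ⊆ timeInterval T :=
  fun _ hs => ⟨hs.1, (EReal.coe_le_coe_iff.mpr hs.2).trans_lt ht.2⟩

lemma DifferentiableAt.hasDerivWithinAt_uncurry_comp {f : ℝ → ℝ → ℝ} {q : ℝ → ℝ} {v s : ℝ} {S : Set ℝ}
    (hf : DifferentiableAt ℝ (Function.uncurry f) (s, q s)) (hq : HasDerivWithinAt q v S s) :
    HasDerivWithinAt (fun τ => f τ (q τ))
      (deriv (fun τ => f τ (q s)) s + v * deriv (f s) (q s)) S s := by
  set L := fderiv ℝ (Function.uncurry f) (s, q s)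
  have hL : HasFDerivAt (Function.uncurry f) L (s, q s) := hf.hasFDerivAt
  have h_t : HasDerivAt (fun τ => f τ (q s)) (L (1, 0)) s :=
    hL.comp_hasDerivAt (f := fun τ => (τ, q s)) s
      ((hasDerivAt_id s).prodMk (hasDerivAt_const s (q s)))
  have h_x : HasDerivAt (f s) (L (0, 1)) (q s) :=
    hL.comp_hasDerivAt (f := fun y => (s, y)) (q s)
      ((hasDerivAt_const (q s) s).prodMk (hasDerivAt_id (q s)))
  have h_split : L (1, v) = L (1, 0) + v * L (0, 1) := by
    rw [show ((1 : ℝ), v) = (1, 0) + v • ((0 : ℝ), (1 : ℝ)) by simp, map_add, map_smul,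
      smul_eq_mul]
  rw [h_t.deriv, h_x.deriv, ← h_split]
  exact hL.comp_hasDerivWithinAt s ((hasDerivWithinAt_id s S).prodMk hq)

lemma hasDerivWithinAt_mul_sq_of_transport {m : ℝ → ℝ → ℝ} {q w : ℝ → ℝ} {lam v a f s : ℝ}
    {S : Set ℝ} (hm : DifferentiableAt ℝ (Function.uncurry m) (s, q s))
    (hq : HasDerivWithinAt q v S s) (hw : HasDerivWithinAt w (a * w s) S s)
    (htransport : deriv (fun τ => m τ (q s)) s + v * deriv (m s) (q s)
      + 2 * a * m s (q s) + lam * m s (q s) = f) :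
    HasDerivWithinAt (fun τ => m τ (q τ) * w τ ^ 2)
      (-lam * (m s (q s) * w s ^ 2) + w s ^ 2 * f) S s := by
  refine ((hm.hasDerivWithinAt_uncurry_comp hq).mul (hw.fun_pow 2)).congr_deriv ?_
  linear_combination (w s ^ 2) * htransport

/-- Duhamel's formula for `y' = -λ y + g`. -/
lemma eq_exp_mul_add_integral_of_hasDerivWithinAt {y g : ℝ → ℝ} {lam t : ℝ} (ht : 0 ≤ t)
    (hy : ∀ s ∈ Icc 0 t, HasDerivWithinAt y (-lam * y s + g s) (Icc 0 t) s)
    (hg : IntervalIntegrable (fun s => exp (lam * s) * g s) MeasureTheory.volume 0 t) :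
    y t = y 0 * exp (-lam * t) + ∫ s in (0 : ℝ)..t, exp (lam * (s - t)) * g s := by
  have hF : ∀ s ∈ Icc 0 t, HasDerivWithinAt (fun τ => exp (lam * τ) * y τ)
      (exp (lam * s) * g s) (Icc 0 t) s := fun s hs => by
    refine (((hasDerivAt_id' s).const_mul lam).exp.hasDerivWithinAt.mul (hy s hs)).congr_deriv ?_
    ring
  have hFTC : ∫ s in (0 : ℝ)..t, exp (lam * s) * g s = exp (lam * t) * y t - y 0 := by
    rw [integral_eq_sub_of_hasDeriv_right_of_le ht (fun s hs => (hF s hs).continuousWithinAt)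
      (fun s hs => ((hF s (Ioo_subset_Icc_self hs)).hasDerivAt
        (Icc_mem_nhds hs.1 hs.2)).hasDerivWithinAt) hg]
    simp
  have hshift : (fun s => exp (lam * (s - t)) * g s)
      = fun s => exp (-lam * t) * (exp (lam * s) * g s) := by
    funext s
    rw [← mul_assoc, ← exp_add]
    congr 2
    ring
  have hexp : exp (-lam * t) * exp (lam * t) = 1 := by
    rw [← exp_add]
    simp
  rw [hshift, integral_const_mul, hFTC]
  linear_combination (-y t) * hexp

theorem stmt_19_general (lam α β γ Γ : ℝ) (T : EReal) (u ux m : ℝ → ℝ → ℝ)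
    (hm : ContDiff ℝ 1 (Function.uncurry m))
    (heq : ∀ t ∈ timeInterval T, ∀ x : ℝ,
      deriv (fun s => m s x) t + (u t x + Γ) * deriv (m t) x
          + 2 * ux t x * m t x + lam * m t x
        = deriv (fun y => hfun α β γ Γ (u t y)) x)
    (x : ℝ) (q w : ℝ → ℝ) (hq0 : q 0 = x) (hw0 : w 0 = 1)
    (hq : ∀ t ∈ timeInterval T, HasDerivWithinAt q (u t (q t) + Γ) (timeInterval T) t)
    (hw : ∀ t ∈ timeInterval T, HasDerivWithinAt w (ux t (q t) * w t) (timeInterval T) t)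
    (hcont : ContinuousOn
      (fun s => Real.exp (lam * s) * (w s) ^ 2
        * deriv (fun y => hfun α β γ Γ (u s y)) (q s)) (timeInterval T)) :
    ∀ t ∈ timeInterval T,
      m t (q t) * (w t) ^ 2
        = m 0 x * Real.exp (-lam * t)
          + ∫ s in (0 : ℝ)..t,
              Real.exp (lam * (s - t)) * (w s) ^ 2
                * deriv (fun y => hfun α β γ Γ (u s y)) (q s) := by
  intro t ht
  set D : ℝ → ℝ := fun s => deriv (fun y => hfun α β γ Γ (u s y)) (q s)
  have hIcc := Icc_subset_timeInterval ht
  have hy : ∀ s ∈ Icc 0 t, HasDerivWithinAt (fun τ => m τ (q τ) * w τ ^ 2)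
      (-lam * (m s (q s) * w s ^ 2) + w s ^ 2 * D s) (Icc 0 t) s := fun s hs =>
    (hasDerivWithinAt_mul_sq_of_transport (hm.differentiable one_ne_zero _)
      (hq s (hIcc hs)) (hw s (hIcc hs)) (heq s (hIcc hs) (q s))).mono hIcc
  have hg : IntervalIntegrable (fun s => exp (lam * s) * (w s ^ 2 * D s))
      MeasureTheory.volume 0 t := by
    simpa only [mul_assoc] using (hcont.mono hIcc).intervalIntegrable_of_Icc ht.1
  simpa only [hq0, hw0, one_pow, mul_one, mul_assoc] using eq_exp_mul_add_integral_of_hasDerivWithinAt ht.1 hy hg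

/-- the representation formula (4.0.4) of Theorem 5.2 of the paper:
`m(t,q(t)) w(t)² = m₀(x) e^{-λt} + ∫₀ᵗ e^{λ(s-t)} w(s)² ∂_x(h∘u)(s,q(s)) ds`
along the flow `q' = u(t,q) + Γ`, `q(0) = x`, with `w = q_x`, `w(0) = 1`. -/
theorem stmt_19 (lam α β γ Γ : ℝ) (T : EReal) (hT : 0 < T) (u ux m : ℝ → ℝ → ℝ)
    (hm : ContDiff ℝ 1 (Function.uncurry m))
    (hux : ∀ t x : ℝ, HasDerivAt (u t) (ux t x) x)
    (huxc : Continuous (Function.uncurry ux))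
    (heq : ∀ t ∈ timeInterval T, ∀ x : ℝ,
      deriv (fun s => m s x) t + (u t x + Γ) * deriv (m t) x
          + 2 * ux t x * m t x + lam * m t x
        = deriv (fun y => hfun α β γ Γ (u t y)) x)
    (x : ℝ) (q w : ℝ → ℝ) (hq0 : q 0 = x) (hw0 : w 0 = 1)
    (hq : ∀ t ∈ timeInterval T, HasDerivWithinAt q (u t (q t) + Γ) (timeInterval T) t)
    (hw : ∀ t ∈ timeInterval T, HasDerivWithinAt w (ux t (q t) * w t) (timeInterval T) t)
    (hcont : ContinuousOn
      (fun s => Real.exp (lam * s) * (w s) ^ 2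
        * deriv (fun y => hfun α β γ Γ (u s y)) (q s)) (timeInterval T)) :
    ∀ t ∈ timeInterval T,
      m t (q t) * (w t) ^ 2
        = m 0 x * Real.exp (-lam * t)
          + ∫ s in (0 : ℝ)..t,
              Real.exp (lam * (s - t)) * (w s) ^ 2
                * deriv (fun y => hfun α β γ Γ (u s y)) (q s) :=
  stmt_19_general lam α β γ Γ T u ux m hm heq x q w hq0 hw0 hq hw hcont
end
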